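/- arXiv:2407.20517 — 2 statements merged into one kernel-verified Lean document; each statement's English description precedes it below -/
import Mathlib

section
/- For every prime power q and every integer n ≥ 4, for all isotropic vectors x, y ∈ F^n that are linearly independent with ⟨x,y⟩ = 0, and all λ, μ ∈ F^×, the number of isotropic vectors z ∈ F^n with ⟨x,z⟩ = λ and ⟨z,y⟩ = μ equals q^{2n−5}. -/
open Matrix

/-- The Hermitian inner product `⟨x,y⟩ = ∑ i, x i * (y i)^q` of row vectors over a field of
order `q^2`. -/
def herm (q : ℕ) {n : ℕ} {F : Type*} [Field F] (x y : Fin n → F) : F :=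
  ∑ i, x i * (y i) ^ q

/-- `x` is an isotropic vector: nonzero with `⟨x,x⟩ = 0`. -/
def Isotropic (q : ℕ) {n : ℕ} {F : Type*} [Field F] (x : Fin n → F) : Prop :=
  x ≠ 0 ∧ herm q x x = 0

section Aux

variable {q n : ℕ} {F : Type*} [Field F]

lemma herm_add_left (x x' y : Fin n → F) :
    herm q (x + x') y = herm q x y + herm q x' y := by
  simp [herm, add_mul, Finset.sum_add_distrib]

lemma herm_smul_left (t : F) (x y : Fin n → F) :
    herm q (t • x) y = t * herm q x y := by
  simp [herm, Finset.mul_sum, mul_assoc]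

lemma herm_neg_left (x y : Fin n → F) : herm q (-x) y = - herm q x y := by
  simp [herm, Finset.sum_neg_distrib]

lemma herm_sub_left (x x' y : Fin n → F) :
    herm q (x - x') y = herm q x y - herm q x' y := by
  rw [sub_eq_add_neg, herm_add_left, herm_neg_left, sub_eq_add_neg]

lemma herm_add_right (hadd : ∀ a b : F, (a + b) ^ q = a ^ q + b ^ q) (x y y' : Fin n → F) :
    herm q x (y + y') = herm q x y + herm q x y' := by
  simp [herm, hadd, mul_add, Finset.sum_add_distrib]

lemma herm_smul_right (t : F) (x y : Fin n → F) :
    herm q x (t • y) = t ^ q * herm q x y := by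
  simp [herm, mul_pow, Finset.mul_sum]
  exact Finset.sum_congr rfl fun i _ => by ring

lemma neg_qpow (hq0 : q ≠ 0) (hadd : ∀ a b : F, (a + b) ^ q = a ^ q + b ^ q) (a : F) :
    (-a) ^ q = - a ^ q := by
  have h : a ^ q + (-a) ^ q = 0 := by
    rw [← hadd]; simp [zero_pow hq0]
  exact eq_neg_of_add_eq_zero_right h

lemma herm_neg_right (hq0 : q ≠ 0) (hadd : ∀ a b : F, (a + b) ^ q = a ^ q + b ^ q)
    (x y : Fin n → F) : herm q x (-y) = - herm q x y := by
  simp [herm, neg_qpow hq0 hadd, Finset.sum_neg_distrib]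

lemma herm_sub_right (hq0 : q ≠ 0) (hadd : ∀ a b : F, (a + b) ^ q = a ^ q + b ^ q)
    (x y y' : Fin n → F) : herm q x (y - y') = herm q x y - herm q x y' := by
  rw [sub_eq_add_neg, herm_add_right hadd, herm_neg_right hq0 hadd, sub_eq_add_neg]

lemma sum_qpow (hq0 : q ≠ 0) (hadd : ∀ a b : F, (a + b) ^ q = a ^ q + b ^ q)
    {ι : Type*} (s : Finset ι) (f : ι → F) :
    (∑ i ∈ s, f i) ^ q = ∑ i ∈ s, (f i) ^ q := by
  classical
  induction s using Finset.induction_on with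
  | empty => simp [zero_pow hq0]
  | @insert _ _ hs ih => rw [Finset.sum_insert hs, Finset.sum_insert hs, hadd, ih]

lemma herm_conj (hq0 : q ≠ 0) (hadd : ∀ a b : F, (a + b) ^ q = a ^ q + b ^ q)
    (hpow : ∀ a : F, (a ^ q) ^ q = a) (x y : Fin n → F) :
    (herm q x y) ^ q = herm q y x := by
  rw [herm, sum_qpow hq0 hadd]
  exact Finset.sum_congr rfl fun i _ => by rw [mul_pow, hpow, mul_comm]

/-- counting fibers of a function shifted by a translation -/
lemma card_filter_shift {G : Type*} [AddCommGroup G] [Fintype G] [DecidableEq G]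
    [DecidableEq F] (S : Finset G) (f : G → F) (g : G) (δ : F)
    (hS : ∀ v ∈ S, v + g ∈ S) (hS' : ∀ v ∈ S, v - g ∈ S)
    (hf : ∀ v ∈ S, f (v + g) = f v + δ) (c : F) :
    (S.filter fun v => f v = c).card = (S.filter fun v => f v = c + δ).card := by
  refine Finset.card_bij' (fun v _ => v + g) (fun w _ => w - g) ?_ ?_ ?_ ?_
  · intro a ha
    rw [Finset.mem_filter] at ha ⊢
    exact ⟨hS a ha.1, by rw [hf a ha.1, ha.2]⟩
  · intro a ha
    rw [Finset.mem_filter] at ha ⊢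
    refine ⟨hS' a ha.1, ?_⟩
    have h2 := hf (a - g) (hS' a ha.1)
    rw [sub_add_cancel] at h2
    have := ha.2
    rw [h2] at this
    exact add_right_cancel this
  · intro a _; exact add_sub_cancel_right a g
  · intro a _; exact sub_add_cancel a g

lemma card_filter_root_le [Fintype F] [DecidableEq F] (P : Polynomial F) (hP : P ≠ 0) :
    (Finset.univ.filter fun a : F => Polynomial.eval a P = 0).card ≤ P.natDegree := by
  calc (Finset.univ.filter fun a : F => Polynomial.eval a P = 0).card
      ≤ P.roots.toFinset.card := by
        apply Finset.card_le_card
        intro a ha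
        rw [Finset.mem_filter] at ha
        rw [Multiset.mem_toFinset, Polynomial.mem_roots hP]
        exact ha.2
    _ ≤ Multiset.card P.roots := Multiset.toFinset_card_le _
    _ ≤ P.natDegree := Polynomial.card_roots' P

end Aux

/-- For `n ≥ 4` and linearly independent isotropic `x, y` with `⟨x,y⟩ = 0`, the number of
isotropic vectors `z` with `⟨x,z⟩ = λ` and `⟨z,y⟩ = μ` equals `q^{2n−5}`. -/
theorem intersection_number_RR_T
    (q : ℕ) (hq : IsPrimePow q) (n : ℕ) (hn : 4 ≤ n)
    (F : Type*) [Field F] [Fintype F] (hF : Fintype.card F = q ^ 2)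
    (x y : Fin n → F) (hx : Isotropic q x) (hy : Isotropic q y)
    (hind : LinearIndependent F ![x, y]) (hxy : herm q x y = 0)
    (lam mu : F) (hlam : lam ≠ 0) (hmu : mu ≠ 0) :
    Nat.card {z : Fin n → F //
        Isotropic q z ∧ herm q x z = lam ∧ herm q z y = mu} = q ^ (2 * n - 5) := by
  classical
  -- basic numeric facts
  have hq2 : 2 ≤ q := hq.two_le
  have hq0 : q ≠ 0 := by omega
  -- characteristic facts
  obtain ⟨p, k, hp, hk, hqpk⟩ := hq
  have hp' : p.Prime := hp.nat_prime
  haveI : Fact p.Prime := ⟨hp'⟩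
  have hcharP : CharP F p := by
    obtain ⟨p', hp'c⟩ := CharP.exists F
    haveI := hp'c
    have hp'prime : p'.Prime := CharP.char_is_prime F p'
    have hdvd : p' ∣ q ^ 2 := by
      rw [← hF]
      exact (CharP.cast_eq_zero_iff F p' _).mp (FiniteField.cast_card_eq_zero F)
    have hdvd2 : p' ∣ p ^ (k * 2) := by rwa [pow_mul, hqpk]
    have : p' = p :=
      (Nat.prime_dvd_prime_iff_eq hp'prime hp').mp (hp'prime.dvd_of_dvd_pow hdvd2)
    rwa [this] at hp'c
  haveI := hcharP
  have hadd : ∀ a b : F, (a + b) ^ q = a ^ q + b ^ q := by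
    intro a b
    rw [← hqpk]
    exact add_pow_char_pow ..
  have hpow : ∀ a : F, (a ^ q) ^ q = a := by
    intro a
    rw [← pow_mul]
    have h : q * q = Fintype.card F := by rw [hF]; ring
    rw [h, FiniteField.pow_card]
  have hq0pow : ∀ a : F, a ^ q = 0 → a = 0 := by
    intro a ha
    exact pow_eq_zero_iff hq0 |>.mp ha
  -- the matrix of the two linear conditions
  set M : Matrix (Fin 2) (Fin n) F :=
    Matrix.of ![fun i => (x i) ^ q, fun i => (y i) ^ q] with hM
  have hMv : ∀ v : Fin n → F, M.mulVecLin v = ![herm q v x, herm q v y] := by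
    intro v
    funext j
    fin_cases j <;>
      simp [hM, Matrix.mulVecLin_apply, Matrix.mulVec, dotProduct, herm, mul_comm]
  -- injectivity of the transpose
  have hMT : Function.Injective (Mᵀ.mulVecLin) := by
    rw [← LinearMap.ker_eq_bot]
    apply LinearMap.ker_eq_bot'.mpr
    intro a ha
    have h1 : (a 0) ^ q • x + (a 1) ^ q • y = 0 := by
      funext i
      have hi := congrFun ha i
      simp only [hM, Matrix.mulVecLin_apply, Matrix.mulVec, dotProduct,
        Fin.sum_univ_two, Matrix.transpose_apply, Matrix.of_apply, Matrix.cons_val_zero,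
        Matrix.cons_val_one, Matrix.head_cons, Pi.zero_apply] at hi
      apply hq0pow
      rw [Pi.add_apply, Pi.smul_apply, Pi.smul_apply, smul_eq_mul, smul_eq_mul,
        hadd, mul_pow, mul_pow, hpow, hpow]
      linear_combination hi
    obtain ⟨h0, h1⟩ := (LinearIndependent.pair_iff.mp hind) _ _ h1
    funext j
    fin_cases j
    · simpa using hq0pow _ h0
    · simpa using hq0pow _ h1
  -- surjectivity of M.mulVecLin
  have hrankT : Mᵀ.rank = 2 := by
    rw [Matrix.rank, LinearMap.finrank_range_of_inj hMT, Module.finrank_pi]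
    simp
  have hrank : M.rank = 2 := by rw [← Matrix.rank_transpose, hrankT]
  have hsurj : Function.Surjective M.mulVecLin := by
    rw [← LinearMap.range_eq_top]
    apply Submodule.eq_top_of_finrank_eq
    have : Module.finrank F (LinearMap.range M.mulVecLin) = M.rank := rfl
    rw [this, hrank, Module.finrank_pi]
    simp
  -- the kernel
  set K := LinearMap.ker M.mulVecLin with hK
  have hmemK : ∀ v : Fin n → F, v ∈ K ↔ herm q v x = 0 ∧ herm q v y = 0 := by
    intro v
    rw [hK, LinearMap.mem_ker, hMv]
    constructor
    · intro h
      exact ⟨congrFun h 0, congrFun h 1⟩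
    · intro ⟨h1, h2⟩
      funext j; fin_cases j <;> simp [h1, h2]
  have hfinrankK : Module.finrank F K = n - 2 := by
    have h := LinearMap.finrank_range_add_finrank_ker M.mulVecLin
    rw [LinearMap.range_eq_top.mpr hsurj, finrank_top, Module.finrank_pi,
      Module.finrank_pi, Fintype.card_fin, Fintype.card_fin, ← hK] at h
    omega
  have hcardK : Fintype.card K = q ^ (2 * n - 4) := by
    rw [Module.card_eq_pow_finrank (K := F) (V := K), hF, hfinrankK, ← pow_mul]
    congr 1
    omega
  -- base point z₀
  obtain ⟨z₀, hz₀⟩ := hsurj ![lam ^ q, mu]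
  rw [hMv] at hz₀
  have hz₀x : herm q z₀ x = lam ^ q := congrFun hz₀ 0
  have hz₀y : herm q z₀ y = mu := congrFun hz₀ 1
  have hxz₀ : herm q x z₀ = lam := by
    rw [← herm_conj hq0 hadd hpow, hz₀x, hpow]
  -- the finsets
  set A : Finset (Fin n → F) :=
    Finset.univ.filter (fun v => herm q v x = 0 ∧ herm q v y = 0) with hA
  have hAcard : A.card = q ^ (2 * n - 4) := by
    rw [hA, ← Fintype.card_subtype]
    rw [← hcardK]
    exact Fintype.card_congr (Equiv.subtypeEquivRight fun v => (hmemK v).symm)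
  set f : (Fin n → F) → F := fun v => herm q (z₀ + v) (z₀ + v) with hf
  set Efin : Finset F := Finset.univ.filter (fun c => c ^ q = c) with hE
  set τ : F → F := fun t => t * lam + (t * lam) ^ q with hτ
  -- herm z z is fixed by the q-power map
  have hermself : ∀ z : Fin n → F, (herm q z z) ^ q = herm q z z := by
    intro z
    rw [herm_conj hq0 hadd hpow]
  have hfE : ∀ v ∈ A, f v ∈ Efin := by
    intro v _
    rw [hE, Finset.mem_filter]
    exact ⟨Finset.mem_univ _, hermself _⟩
  -- values of herm with members of A
  have hvx : ∀ v ∈ A, herm q v x = 0 := fun v hv => ((Finset.mem_filter.mp hv).2).1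
  have hvy : ∀ v ∈ A, herm q v y = 0 := fun v hv => ((Finset.mem_filter.mp hv).2).2
  have hxv : ∀ v ∈ A, herm q x v = 0 := by
    intro v hv
    rw [← herm_conj hq0 hadd hpow, hvx v hv, zero_pow hq0]
  -- the shift property
  have hshift : ∀ t : F, ∀ v ∈ A, f (v + t • x) = f v + τ t := by
    intro t v hv
    simp only [hf, hτ]
    rw [← add_assoc]
    simp only [herm_add_left, herm_add_right hadd, herm_smul_left, herm_smul_right]
    rw [hz₀x, hxz₀, hvx v hv, hxv v hv, hx.2, mul_pow]
    ring
  -- membership stability of A under shifts by multiples of x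
  have hAshift : ∀ t : F, ∀ v ∈ A, v + t • x ∈ A := by
    intro t v hv
    rw [hA, Finset.mem_filter]
    refine ⟨Finset.mem_univ _, ?_, ?_⟩
    · rw [herm_add_left, herm_smul_left, hvx v hv, hx.2, mul_zero, add_zero]
    · rw [herm_add_left, herm_smul_left, hvy v hv, hxy, mul_zero, add_zero]
  have hAshift' : ∀ t : F, ∀ v ∈ A, v - t • x ∈ A := by
    intro t v hv
    have : v - t • x = v + (-t) • x := by module
    rw [this]
    exact hAshift (-t) v hv
  -- τ lands in Efin
  have hτE : ∀ t : F, τ t ∈ Efin := by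
    intro t
    rw [hE, Finset.mem_filter]
    refine ⟨Finset.mem_univ _, ?_⟩
    rw [hτ]
    simp only
    rw [hadd, hpow, add_comm]
  -- cardinality of Efin is exactly q
  have hEle : Efin.card ≤ q := by
    set P : Polynomial F := Polynomial.X ^ q - Polynomial.X with hP
    have hdeg : P.natDegree = q := by
      rw [hP]
      rw [Polynomial.natDegree_sub_eq_left_of_natDegree_lt]
      · exact Polynomial.natDegree_X_pow q
      · rw [Polynomial.natDegree_X_pow, Polynomial.natDegree_X]; omega
    have hPne : P ≠ 0 := by
      intro h
      rw [h, Polynomial.natDegree_zero] at hdeg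
      omega
    have := card_filter_root_le P hPne
    rw [hdeg] at this
    refine le_trans (le_of_eq ?_) this
    congr 1
    ext c
    simp [hP, hE, sub_eq_zero]
  have hτfiber : ∀ c : F, (Finset.univ.filter fun t => τ t = c).card ≤ q := by
    intro c
    set P : Polynomial F := Polynomial.C (lam ^ q) * Polynomial.X ^ q +
      (Polynomial.C lam * Polynomial.X + Polynomial.C (-c)) with hP
    have hdeglin : (Polynomial.C lam * Polynomial.X + Polynomial.C (-c)).natDegree ≤ 1 :=
      Polynomial.natDegree_linear_le
    have hdegq : (Polynomial.C (lam ^ q) * Polynomial.X ^ q).natDegree = q :=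
      Polynomial.natDegree_C_mul_X_pow q _ (pow_ne_zero q hlam)
    have hdeg : P.natDegree = q := by
      rw [hP, Polynomial.natDegree_add_eq_left_of_natDegree_lt (by rw [hdegq]; omega), hdegq]
    have hPne : P ≠ 0 := by
      intro h
      rw [h, Polynomial.natDegree_zero] at hdeg
      omega
    have := card_filter_root_le P hPne
    rw [hdeg] at this
    refine le_trans (le_of_eq ?_) this
    congr 1
    ext t
    simp only [Finset.mem_filter, Finset.mem_univ, true_and, hP, hτ]
    simp only [Polynomial.eval_add, Polynomial.eval_mul, Polynomial.eval_pow,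
      Polynomial.eval_C, Polynomial.eval_X]
    rw [mul_pow]
    constructor
    · intro h; linear_combination h
    · intro h; linear_combination h
  have hEge : q ≤ (Finset.univ.image τ).card := by
    have hsum : (Finset.univ : Finset F).card =
        ∑ c ∈ Finset.univ.image τ, (Finset.univ.filter fun t => τ t = c).card := by
      apply Finset.card_eq_sum_card_fiberwise
      intro t _
      exact Finset.mem_image_of_mem τ (Finset.mem_univ t)
    have hle : (Finset.univ : Finset F).card ≤ (Finset.univ.image τ).card * q := by
      rw [hsum]
      calc ∑ c ∈ Finset.univ.image τ, (Finset.univ.filter fun t => τ t = c).card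
          ≤ ∑ _c ∈ Finset.univ.image τ, q := Finset.sum_le_sum fun c _ => hτfiber c
        _ = (Finset.univ.image τ).card * q := by rw [Finset.sum_const, smul_eq_mul]
    rw [Finset.card_univ, hF, pow_two] at hle
    by_contra hcon
    push_neg at hcon
    have : (Finset.univ.image τ).card * q < q * q := by
      apply Nat.mul_lt_mul_of_lt_of_le hcon (le_refl q)
      omega
    omega
  have hτimE : Finset.univ.image τ ⊆ Efin := by
    intro c hc
    rw [Finset.mem_image] at hc
    obtain ⟨t, _, rfl⟩ := hc
    exact hτE t
  have hEcard : Efin.card = q := le_antisymm hEle (le_trans hEge (Finset.card_le_card hτimE))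
  have hτsurjE : ∀ c ∈ Efin, ∃ t, τ t = c := by
    intro c hc
    have heq : Finset.univ.image τ = Efin :=
      Finset.eq_of_subset_of_card_le hτimE (by omega)
    rw [← heq, Finset.mem_image] at hc
    obtain ⟨t, _, ht⟩ := hc
    exact ⟨t, ht⟩
  -- fibers of f over Efin all have the same size
  set N := (A.filter fun v => f v = 0).card with hN
  have hfibers : ∀ c ∈ Efin, (A.filter fun v => f v = c).card = N := by
    intro c hc
    obtain ⟨t, ht⟩ := hτsurjE c hc
    rw [hN]
    have := card_filter_shift A f (t • x) (τ t) (hAshift t) (hAshift' t)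
      (fun v hv => hshift t v hv) 0
    rw [zero_add, ht] at this
    exact this.symm
  have hsumA : A.card = Efin.card * N := by
    rw [Finset.card_eq_sum_card_fiberwise hfE]
    rw [Finset.sum_congr rfl hfibers, Finset.sum_const, smul_eq_mul]
  -- identify the target set with the fiber over 0
  have hzero_mem : (0 : F) ∈ Efin := by
    rw [hE, Finset.mem_filter]
    exact ⟨Finset.mem_univ _, zero_pow hq0⟩
  have hScard : Nat.card {z : Fin n → F //
      Isotropic q z ∧ herm q x z = lam ∧ herm q z y = mu} = N := by
    rw [Nat.card_eq_fintype_card, Fintype.card_subtype, hN]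
    refine Finset.card_bij' (fun z _ => z - z₀) (fun v _ => v + z₀) ?_ ?_ ?_ ?_
    · intro z hz
      rw [Finset.mem_filter] at hz
      obtain ⟨-, ⟨hz0, hzz⟩, hxz, hzy⟩ := hz
      have hzx : herm q z x = lam ^ q := by
        rw [← herm_conj hq0 hadd hpow, hxz]
      rw [Finset.mem_filter, hA, Finset.mem_filter]
      refine ⟨⟨Finset.mem_univ _, ?_, ?_⟩, ?_⟩
      · rw [herm_sub_left, hzx, hz₀x, sub_self]
      · rw [herm_sub_left, hzy, hz₀y, sub_self]
      · simp only [hf]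
        rw [show z₀ + (z - z₀) = z by abel, hzz]
    · intro v hv
      rw [Finset.mem_filter, hA, Finset.mem_filter] at hv
      obtain ⟨⟨-, hvx', hvy'⟩, hfv⟩ := hv
      have hxv' : herm q x v = 0 := by
        rw [← herm_conj hq0 hadd hpow, hvx', zero_pow hq0]
      have hhermz : herm q (v + z₀) (v + z₀) = 0 := by
        rw [show v + z₀ = z₀ + v by abel]
        exact hfv
      have hxz : herm q x (v + z₀) = lam := by
        rw [herm_add_right hadd, hxv', hxz₀, zero_add]
      rw [Finset.mem_filter]
      refine ⟨Finset.mem_univ _, ⟨?_, hhermz⟩, hxz, ?_⟩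
      · intro h0
        rw [h0] at hxz
        rw [herm] at hxz
        simp [zero_pow hq0] at hxz
        exact hlam hxz.symm
      · rw [herm_add_left, hvy', hz₀y, zero_add]
    · intro z _; exact sub_add_cancel z z₀
    · intro v _; exact add_sub_cancel_right v z₀
  -- final arithmetic
  rw [hScard]
  rw [hAcard, hEcard] at hsumA
  have harith : q ^ (2 * n - 4) = q * q ^ (2 * n - 5) := by
    rw [← pow_succ']
    congr 1
    omega
  rw [harith] at hsumA
  exact (Nat.eq_of_mul_eq_mul_left (by omega) hsumA.symm)
end

section
/- Let q ≥ 3 be a prime power, n ≥ 2 an integer, and α a generator of the cyclic group F^×. For every isotropic vector x ∈ F^n, setting y = α^q x (which is isotropic), the number of isotropic vectors z ∈ F^n with ⟨x,z⟩ = 1 and ⟨z,y⟩ = α equals q^{2n−3}, while the number of isotropic vectors z ∈ F^n with ⟨x,z⟩ = α and ⟨z,y⟩ = 1 equals 0. In particular, the two intersection numbers p_{ij}^h and p_{ji}^h of the orbital scheme of GU(n,q) on Φ(n,q) differ, so the scheme is not commutative for q ≥ 3. -/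
open Matrix Polynomial

/-- Counting helper: if all fibers of `g` have the same cardinality then the cardinality of the
domain is the number of fibers times the common fiber size. -/
lemma card_eq_mul_fiber {β γ : Type*} [Fintype β] [Fintype γ] (g : β → γ)
    (h : ∀ c₁ c₂ : γ, Nat.card {b // g b = c₁} = Nat.card {b // g b = c₂}) (c : γ) :
    Fintype.card β = Fintype.card γ * Nat.card {b // g b = c} := by
  classical
  rw [← Fintype.card_congr (Equiv.sigmaFiberEquiv g), Fintype.card_sigma]
  have key : ∀ c' : γ, Fintype.card {b // g b = c'} = Nat.card {b // g b = c} := fun c' => by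
    rw [← Nat.card_eq_fintype_card]; exact h c' c
  simp only [key, Finset.sum_const, Finset.card_univ, smul_eq_mul]

/-- The solutions of `a ^ q = d * a` number at most `q`. -/
lemma card_pow_eq_le {F : Type*} [Field F] [Fintype F] (q : ℕ) (hq : 2 ≤ q) (d : F) :
    Nat.card {a : F // a ^ q = d * a} ≤ q := by
  classical
  set P : F[X] := X ^ q - C d * X with hP
  have hPne : P ≠ 0 := by
    intro h0
    have : P.coeff q = 0 := by rw [h0]; simp
    rw [hP, coeff_sub, coeff_X_pow, coeff_C_mul, coeff_X, if_pos rfl,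
      if_neg (by omega : ¬ (1 : ℕ) = q)] at this
    simp at this
  have hdeg : P.natDegree ≤ q := by
    refine (natDegree_sub_le _ _).trans ?_
    simp only [natDegree_X_pow, max_le_iff, le_refl, true_and]
    exact (natDegree_C_mul_le _ _).trans (by simp; omega)
  rw [Nat.card_eq_fintype_card, Fintype.card_subtype]
  refine le_trans (Polynomial.card_le_degree_of_subset_roots
    (Z := Finset.univ.filter (fun a => a ^ q = d * a)) ?_) hdeg
  intro a ha
  simp only [Finset.mem_val, Finset.mem_filter] at ha
  rw [mem_roots hPne]
  simp [hP, IsRoot, ha.2]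

/-- A witness of non-commutativity for `q ≥ 3`: with `y = α^q • x`, the intersection numbers
`p_{ij}^h` and `p_{ji}^h` (where `R_i` is `⟨x,z⟩ = 1` and `R_j` is `⟨z,y⟩ = α`) differ:
one count equals `q^{2n−3}` and the other equals `0`. -/
theorem noncommutativity_witness
    (q : ℕ) (hq : IsPrimePow q) (hq3 : 3 ≤ q) (n : ℕ) (hn : 2 ≤ n)
    (F : Type*) [Field F] [Fintype F] (hF : Fintype.card F = q ^ 2)
    (α : Fˣ) (hα : ∀ a : Fˣ, a ∈ Subgroup.zpowers α)
    (x : Fin n → F) (hx : Isotropic q x) :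
    Isotropic q (((α : F) ^ q) • x) ∧
    Nat.card {z : Fin n → F // Isotropic q z ∧ herm q x z = 1 ∧
        herm q z (((α : F) ^ q) • x) = (α : F)} = q ^ (2 * n - 3) ∧
    Nat.card {z : Fin n → F // Isotropic q z ∧ herm q x z = (α : F) ∧
        herm q z (((α : F) ^ q) • x) = 1} = 0 := by
  classical
  -- characteristic facts
  obtain ⟨p, k, hpp, hk, hpk⟩ := hq
  have hpP : p.Prime := hpp.nat_prime
  haveI : Fact p.Prime := ⟨hpP⟩
  have hch : CharP F p := by
    obtain ⟨m, hrP, hm⟩ := FiniteField.card F (ringChar F)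
    have hpr : p = ringChar F := by
      have h1 : p ^ (k * 2) = ringChar F ^ (m : ℕ) := by
        rw [pow_mul, hpk, ← hF, hm]
      have : p ∣ ringChar F ^ (m : ℕ) := h1 ▸ dvd_pow_self p (by positivity)
      exact ((Nat.prime_dvd_prime_iff_eq hpP hrP).mp (hpP.dvd_of_dvd_pow this))
    rw [hpr]; exact ringChar.charP F
  haveI := hch
  have hadd : ∀ a b : F, (a + b) ^ q = a ^ q + b ^ q := fun a b => by
    rw [← hpk]; exact add_pow_char_pow a b p k
  have hqq : q * q = Fintype.card F := by rw [hF, sq]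
  have hpow2 : ∀ a : F, (a ^ q) ^ q = a := fun a => by
    rw [← pow_mul, hqq, FiniteField.pow_card]
  have hq0 : q ≠ 0 := by omega
  -- Frobenius as additive hom
  let φ : F →+ F := AddMonoidHom.mk' (fun a => a ^ q) hadd
  have hsubpow : ∀ a b : F, (a - b) ^ q = a ^ q - b ^ q := fun a b => map_sub φ a b
  have hnegpow : ∀ a : F, (-a) ^ q = -(a ^ q) := fun a => map_neg φ a
  -- herm expansion lemmas
  have herm_add_left : ∀ u v w : Fin n → F, herm q (u + v) w = herm q u w + herm q v w := by
    intro u v w; simp [herm, add_mul, Finset.sum_add_distrib]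
  have herm_add_right : ∀ u v w : Fin n → F, herm q u (v + w) = herm q u v + herm q u w := by
    intro u v w; simp [herm, hadd, mul_add, Finset.sum_add_distrib]
  have herm_sub_right : ∀ u v w : Fin n → F, herm q u (v - w) = herm q u v - herm q u w := by
    intro u v w; simp [herm, hsubpow, mul_sub, Finset.sum_sub_distrib]
  have herm_smul_left : ∀ (c : F) (u v : Fin n → F), herm q (c • u) v = c * herm q u v := by
    intro c u v; simp [herm, Finset.mul_sum, mul_assoc]
  have herm_smul_right : ∀ (c : F) (u v : Fin n → F), herm q u (c • v) = c ^ q * herm q u v := by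
    intro c u v; simp [herm, mul_pow, Finset.mul_sum, mul_left_comm]
  have herm_conj : ∀ u v : Fin n → F, herm q v u = herm q u v ^ q := by
    intro u v
    calc herm q v u = ∑ i, (u i * v i ^ q) ^ q := by
          apply Finset.sum_congr rfl
          intro i _
          rw [mul_pow, hpow2]; ring
    _ = herm q u v ^ q := (map_sum φ (fun i => u i * v i ^ q) Finset.univ).symm
  -- basic facts about x and α
  obtain ⟨hxne, hxx⟩ := hx
  obtain ⟨i0, hi0⟩ : ∃ i, x i ≠ 0 := by
    by_contra h; push_neg at h; exact hxne (funext fun i => h i)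
  have hexists : ∀ cc : F, ∃ w : Fin n → F, herm q x w = cc := by
    intro cc
    refine ⟨Pi.single i0 ((cc / x i0) ^ q), ?_⟩
    rw [herm, Finset.sum_eq_single i0]
    · rw [Pi.single_eq_same, hpow2, mul_comm, div_mul_cancel₀ _ hi0]
    · intro j _ hj; rw [Pi.single_eq_of_ne hj, zero_pow hq0, mul_zero]
    · intro h; exact absurd (Finset.mem_univ i0) h
  have hordα : orderOf α = q ^ 2 - 1 := by
    rw [orderOf_eq_card_of_forall_mem_zpowers hα, Nat.card_units,
      Nat.card_eq_fintype_card, hF]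
  have hα_ne : (α : F) * (α : F) ^ q ≠ 1 := by
    intro h
    have hu : α ^ (q + 1) = 1 := by
      apply Units.ext
      rw [Units.val_pow_eq_pow_val, Units.val_one, pow_succ, mul_comm]
      exact h
    have hdvd := orderOf_dvd_of_pow_eq_one hu
    rw [hordα] at hdvd
    have hle := Nat.le_of_dvd (by omega) hdvd
    have h3q : 3 * q ≤ q * q := Nat.mul_le_mul_right q hq3
    rw [pow_two] at hle
    omega
  set c : F := (α : F) ^ q with hc
  have hcq : c ^ q = (α : F) := hpow2 (α : F)
  have hcne : c ≠ 0 := pow_ne_zero _ (Units.ne_zero α)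
  have hzy : ∀ z : Fin n → F, herm q z (c • x) = (α : F) * (herm q x z) ^ q := fun z => by
    rw [herm_smul_right, hcq, herm_conj]
  refine ⟨⟨smul_ne_zero hcne hxne, ?_⟩, ?_, ?_⟩
  · rw [herm_smul_left, herm_smul_right, hxx, mul_zero, mul_zero]
  · -- the main count
    -- trace machinery
    set t : F →+ F := AddMonoidHom.mk' (fun a => a + a ^ q)
      (fun a b => by simp only [hadd]; ring) with ht
    have htapp : ∀ a : F, t a = a + a ^ q := fun a => rfl
    have htK : ∀ a : F, (t a) ^ q = t a := fun a => by
      rw [htapp, hadd, hpow2]; ring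
    have hker_le : Nat.card {a : F // t a = 0} ≤ q := by
      refine le_trans (le_of_eq (Nat.card_congr (Equiv.subtypeEquivRight ?_)))
        (card_pow_eq_le q (by omega) (-1 : F))
      intro a
      rw [htapp]
      constructor <;> intro h <;> linear_combination h
    have hK_le : Nat.card {a : F // a ^ q = a} ≤ q := by
      refine le_trans (le_of_eq (Nat.card_congr (Equiv.subtypeEquivRight ?_)))
        (card_pow_eq_le q (by omega) (1 : F))
      intro a
      constructor <;> intro h <;> linear_combination h
    -- injection from range into K
    have hrange_inj : Function.Injective
        (fun r : Set.range (⇑t) => (⟨r.1, by obtain ⟨a, ha⟩ := r.2; rw [← ha]; exact htK a⟩ :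
          {a : F // a ^ q = a})) := by
      intro r₁ r₂ h
      simp only [Subtype.mk.injEq] at h
      exact Subtype.ext h
    have hRng_le : Fintype.card (Set.range (⇑t)) ≤ q := by
      rw [← Nat.card_eq_fintype_card]
      exact le_trans (Nat.card_le_card_of_injective _ hrange_inj) hK_le
    -- fibers of t over its range are cosets of the kernel
    have fiber_g2 : ∀ cc : Set.range (⇑t),
        Nat.card {a : F // (⟨t a, Set.mem_range_self a⟩ : Set.range (⇑t)) = cc}
          = Nat.card {a : F // t a = 0} := by
      intro cc
      obtain ⟨a₀, ha₀⟩ := cc.2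
      apply Nat.card_congr
      refine
        { toFun := fun a => ⟨a.1 - a₀, ?_⟩
          invFun := fun a => ⟨a.1 + a₀, ?_⟩
          left_inv := fun a => Subtype.ext (sub_add_cancel _ _)
          right_inv := fun a => Subtype.ext (add_sub_cancel_right _ _) }
      · have h1 : t a.1 = cc.1 := congrArg Subtype.val a.2
        rw [map_sub, h1, ha₀, sub_self]
      · apply Subtype.ext
        show t (a.1 + a₀) = cc.1
        rw [map_add, a.2, ha₀, zero_add]
    have hprod : q * q = Fintype.card (Set.range (⇑t)) * Nat.card {a : F // t a = 0} := by
      have h1 := card_eq_mul_fiber (fun a : F => (⟨t a, Set.mem_range_self a⟩ : Set.range (⇑t)))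
        (fun c₁ c₂ => by rw [fiber_g2 c₁, fiber_g2 c₂])
        ⟨t 0, Set.mem_range_self 0⟩
      rw [← hqq] at h1
      rw [h1, fiber_g2]
    have hker_eq : Nat.card {a : F // t a = 0} = q := by
      have h1 : q * q ≤ q * Nat.card {a : F // t a = 0} := by
        calc q * q = Fintype.card (Set.range (⇑t)) * Nat.card {a : F // t a = 0} := hprod
        _ ≤ q * Nat.card {a : F // t a = 0} := Nat.mul_le_mul_right _ hRng_le
      have h2 : q ≤ Nat.card {a : F // t a = 0} := Nat.le_of_mul_le_mul_left h1 (by omega)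
      omega
    have hRng_eq : Fintype.card (Set.range (⇑t)) = q := by
      have h1 := hprod
      rw [hker_eq] at h1
      exact (Nat.eq_of_mul_eq_mul_right (by omega) h1.symm)
    -- surjectivity of the trace onto K
    have hsurj : ∀ cc : F, cc ^ q = cc → ∃ a : F, t a = cc := by
      intro cc hcc
      by_contra hno
      push_neg at hno
      have hnotmem : (⟨cc, hcc⟩ : {a : F // a ^ q = a}) ∉ Set.range
          (fun r : Set.range (⇑t) => (⟨r.1, by obtain ⟨a, ha⟩ := r.2; rw [← ha]; exact htK a⟩ :
            {a : F // a ^ q = a})) := by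
        rintro ⟨r, hr⟩
        obtain ⟨a, ha⟩ := r.2
        have h1 : r.1 = cc := congrArg Subtype.val hr
        exact hno a (by rw [ha, h1])
      have hlt := Fintype.card_lt_of_injective_of_notMem _ hrange_inj hnotmem
      rw [hRng_eq] at hlt
      have h2 : Nat.card {a : F // a ^ q = a} = Fintype.card {a : F // a ^ q = a} :=
        Nat.card_eq_fintype_card
      omega
    have hfiberK : ∀ cc : F, cc ^ q = cc → Nat.card {a : F // t a = cc} = q := by
      intro cc hcc
      obtain ⟨a₀, ha₀⟩ := hsurj cc hcc
      rw [← hker_eq]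
      apply Nat.card_congr
      exact
        { toFun := fun a => ⟨a.1 - a₀, by rw [map_sub, a.2, ha₀, sub_self]⟩
          invFun := fun a => ⟨a.1 + a₀, by rw [map_add, a.2, ha₀, zero_add]⟩
          left_inv := fun a => Subtype.ext (sub_add_cancel _ _)
          right_inv := fun a => Subtype.ext (add_sub_cancel_right _ _) }
    have hKcard : Nat.card {a : F // a ^ q = a} = q := by
      refine le_antisymm hK_le ?_
      calc q = Fintype.card (Set.range (⇑t)) := hRng_eq.symm
      _ = Nat.card (Set.range (⇑t)) := Nat.card_eq_fintype_card.symm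
      _ ≤ Nat.card {a : F // a ^ q = a} := Nat.card_le_card_of_injective _ hrange_inj
    -- build the hyperbolic partner e
    obtain ⟨e, he1, hee⟩ : ∃ e : Fin n → F, herm q x e = 1 ∧ herm q e e = 0 := by
      obtain ⟨e₀, he₀⟩ := hexists 1
      have hc₀ : (herm q e₀ e₀) ^ q = herm q e₀ e₀ := (herm_conj e₀ e₀).symm
      obtain ⟨s₀, hs₀⟩ := hsurj (-(herm q e₀ e₀)) (by rw [hnegpow, hc₀])
      rw [htapp] at hs₀
      have hconj_e₀x : herm q e₀ x = 1 := by rw [herm_conj x e₀, he₀, one_pow]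
      refine ⟨e₀ + s₀ • x, ?_, ?_⟩
      · rw [herm_add_right, herm_smul_right, he₀, hxx, mul_zero, add_zero]
      · simp only [herm_add_left, herm_add_right, herm_smul_left, herm_smul_right]
        rw [he₀, hconj_e₀x, hxx]
        linear_combination hs₀
    -- reduce the target set
    have key1 : Nat.card {z : Fin n → F // Isotropic q z ∧ herm q x z = 1 ∧
        herm q z (c • x) = (α : F)}
        = Nat.card {z : Fin n → F // herm q z z = 0 ∧ herm q x z = 1} := by
      apply Nat.card_congr
      apply Equiv.subtypeEquivRight
      intro z
      constructor
      · rintro ⟨⟨_, hzz⟩, h1, _⟩; exact ⟨hzz, h1⟩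
      · rintro ⟨hzz, h1⟩
        refine ⟨⟨?_, hzz⟩, h1, ?_⟩
        · intro hz0
          rw [hz0] at h1
          simp [herm, zero_pow hq0] at h1
        · rw [hzy, h1, one_pow, mul_one]
    have expand : ∀ u : Fin n → F,
        herm q (u + e) (u + e) = herm q u u + (herm q u e + herm q u e ^ q) := by
      intro u
      simp only [herm_add_left, herm_add_right]
      rw [hee, herm_conj u e]
      ring
    have key2 : Nat.card {z : Fin n → F // herm q z z = 0 ∧ herm q x z = 1}
        = Nat.card {u : Fin n → F // herm q x u = 0 ∧
            herm q u u + (herm q u e + herm q u e ^ q) = 0} := by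
      apply Nat.card_congr
      refine
        { toFun := fun z => ⟨z.1 - e, ?_, ?_⟩
          invFun := fun u => ⟨u.1 + e, ?_, ?_⟩
          left_inv := fun z => Subtype.ext (sub_add_cancel _ _)
          right_inv := fun u => Subtype.ext (add_sub_cancel_right _ _) }
      · rw [herm_sub_right, z.2.2, he1, sub_self]
      · have h := expand (z.1 - e)
        rw [sub_add_cancel] at h
        rw [← h, z.2.1]
      · rw [expand]; exact u.2.2
      · rw [herm_add_right, u.2.1, he1, zero_add]
    -- the set K as a subtype, and the fibering map g3
    have hfK : ∀ u : Fin n → F,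
        (herm q u u + (herm q u e + herm q u e ^ q)) ^ q
          = herm q u u + (herm q u e + herm q u e ^ q) := by
      intro u
      rw [hadd, hadd, hpow2, ← herm_conj u u]
      ring
    -- fibers of g3 all have equal cardinality
    have fiber_g3 : ∀ c₁ c₂ : {cc : F // cc ^ q = cc},
        Nat.card {u : {u : Fin n → F // herm q x u = 0} //
            (⟨herm q u.1 u.1 + (herm q u.1 e + herm q u.1 e ^ q), hfK u.1⟩ :
              {cc : F // cc ^ q = cc}) = c₁}
        = Nat.card {u : {u : Fin n → F // herm q x u = 0} //
            (⟨herm q u.1 u.1 + (herm q u.1 e + herm q u.1 e ^ q), hfK u.1⟩ :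
              {cc : F // cc ^ q = cc}) = c₂} := by
      intro c₁ c₂
      have hd : (c₂.1 - c₁.1) ^ q = c₂.1 - c₁.1 := by rw [hsubpow, c₁.2, c₂.2]
      obtain ⟨s, hs⟩ := hsurj _ hd
      rw [htapp] at hs
      have hshift : ∀ u : Fin n → F, herm q x u = 0 →
          herm q (u + s • x) (u + s • x) + (herm q (u + s • x) e + herm q (u + s • x) e ^ q)
          = (herm q u u + (herm q u e + herm q u e ^ q)) + (s + s ^ q) := by
        intro u hu
        have hux : herm q u x = 0 := by rw [herm_conj x u, hu, zero_pow hq0]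
        simp only [herm_add_left, herm_add_right, herm_smul_left, herm_smul_right, hadd,
          mul_pow]
        rw [hu, hux, hxx, he1]
        ring
      have hmemb : ∀ (u : Fin n → F) (s' : F), herm q x u = 0 →
          herm q x (u + s' • x) = 0 := by
        intro u s' hu
        rw [herm_add_right, herm_smul_right, hu, hxx, mul_zero, add_zero]
      apply Nat.card_congr
      refine
        { toFun := fun u => ⟨⟨u.1.1 + s • x, hmemb u.1.1 s u.1.2⟩, ?_⟩
          invFun := fun u => ⟨⟨u.1.1 - s • x, by
            have h0 := hmemb u.1.1 (-s) u.1.2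
            rwa [neg_smul, ← sub_eq_add_neg] at h0⟩, ?_⟩
          left_inv := fun u => Subtype.ext (Subtype.ext (add_sub_cancel_right _ _))
          right_inv := fun u => Subtype.ext (Subtype.ext (sub_add_cancel _ _)) }
      · have h1 : herm q u.1.1 u.1.1 + (herm q u.1.1 e + herm q u.1.1 e ^ q) = c₁.1 :=
          congrArg Subtype.val u.2
        apply Subtype.ext
        show herm q (u.1.1 + s • x) (u.1.1 + s • x) +
          (herm q (u.1.1 + s • x) e + herm q (u.1.1 + s • x) e ^ q) = c₂.1
        rw [hshift u.1.1 u.1.2, h1, hs]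
        ring
      · have h1 : herm q u.1.1 u.1.1 + (herm q u.1.1 e + herm q u.1.1 e ^ q) = c₂.1 :=
          congrArg Subtype.val u.2
        apply Subtype.ext
        show herm q (u.1.1 - s • x) (u.1.1 - s • x) +
          (herm q (u.1.1 - s • x) e + herm q (u.1.1 - s • x) e ^ q) = c₁.1
        have h0 : herm q x (u.1.1 - s • x) = 0 := by
          have h0 := hmemb u.1.1 (-s) u.1.2
          rwa [neg_smul, ← sub_eq_add_neg] at h0
        have h2 := hshift (u.1.1 - s • x) h0
        rw [sub_add_cancel] at h2
        rw [h1] at h2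
        linear_combination -h2 - hs
    -- cardinality of the hyperplane
    have hcardFn : Fintype.card (Fin n → F) = q ^ (2 * n) := by
      rw [Fintype.card_fun, hF, Fintype.card_fin, ← pow_mul]
    have fiber_g1 : ∀ c₁ c₂ : F, Nat.card {u : Fin n → F // herm q x u = c₁}
        = Nat.card {u : Fin n → F // herm q x u = c₂} := by
      intro c₁ c₂
      obtain ⟨w, hw⟩ := hexists (c₂ - c₁)
      apply Nat.card_congr
      exact
        { toFun := fun u => ⟨u.1 + w, by rw [herm_add_right, u.2, hw]; ring⟩
          invFun := fun u => ⟨u.1 - w, by rw [herm_sub_right, u.2, hw]; ring⟩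
          left_inv := fun u => Subtype.ext (add_sub_cancel_right _ _)
          right_inv := fun u => Subtype.ext (sub_add_cancel _ _) }
    have hHcard : Nat.card {u : Fin n → F // herm q x u = 0} = q ^ (2 * n - 2) := by
      have h1 := card_eq_mul_fiber (fun u : Fin n → F => herm q x u) fiber_g1 0
      rw [hcardFn, hF] at h1
      have h2 : q ^ (2 * n) = q ^ 2 * q ^ (2 * n - 2) := by
        rw [← pow_add]; congr 1; omega
      rw [h2] at h1
      exact (Nat.eq_of_mul_eq_mul_left (by positivity) h1).symm
    -- put everything together
    have h0K : ((0 : F)) ^ q = 0 := zero_pow hq0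
    have h1 := card_eq_mul_fiber
      (fun u : {u : Fin n → F // herm q x u = 0} =>
        (⟨herm q u.1 u.1 + (herm q u.1 e + herm q u.1 e ^ q), hfK u.1⟩ :
          {cc : F // cc ^ q = cc}))
      fiber_g3 ⟨0, h0K⟩
    rw [← Nat.card_eq_fintype_card, ← Nat.card_eq_fintype_card, hHcard, hKcard] at h1
    have e3 : {u : {u : Fin n → F // herm q x u = 0} //
        (⟨herm q u.1 u.1 + (herm q u.1 e + herm q u.1 e ^ q), hfK u.1⟩ :
          {cc : F // cc ^ q = cc}) = ⟨0, h0K⟩}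
        ≃ {u : Fin n → F // herm q x u = 0 ∧
            herm q u u + (herm q u e + herm q u e ^ q) = 0} :=
      { toFun := fun u => ⟨u.1.1, u.1.2, congrArg Subtype.val u.2⟩
        invFun := fun u => ⟨⟨u.1, u.2.1⟩, Subtype.ext u.2.2⟩
        left_inv := fun u => rfl
        right_inv := fun u => rfl }
    rw [key1, key2, ← Nat.card_congr e3]
    have h2 : q ^ (2 * n - 2) = q * q ^ (2 * n - 3) := by
      rw [← pow_succ']; congr 1; omega
    rw [h2] at h1
    exact (Nat.eq_of_mul_eq_mul_left (by omega) h1).symm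
  · -- the empty count
    have : IsEmpty {z : Fin n → F // Isotropic q z ∧ herm q x z = (α : F) ∧
        herm q z (c • x) = 1} := by
      refine ⟨fun z => ?_⟩
      obtain ⟨z, hz1, hz2, hz3⟩ := z
      rw [hzy, hz2] at hz3
      exact hα_ne hz3
    simp only [Nat.card_of_isEmpty]
end
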